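/- Let G = ⟨a⟩ ≅ Z_{2^n} with n ≥ 3 act on itself, and let Hol(G) = G_R ⋊ Aut(G) act on the set G, where G_R acts by right multiplication. For any nonidentity g ∈ G, the stabilizer of g in Hol(G) is ⟨g^{-2} x, g^{5^{-1}-1} y⟩. -/

import Mathlib

/-!
An element of `Hol(ZMod N)` with automorphism part `u` fixes `g` exactly when its translation
part is `(u⁻¹ - 1) * g`, so the stabilizer of `g` is the image of the embedding
`u ↦ aff N u ((u⁻¹ - 1) * g)` of `(ZMod N)ˣ`, and the two generators are the images of `-1` and `5`.
It remains that `-1` and `5` generate `(ZMod (2 ^ n))ˣ`: `5` has order `2 ^ (n - 2)`, so its powers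
form a subgroup of index `2`, and `-1` is not among them because it is not `1` modulo `4`.
-/

/-- The element `a^b x^?y^?` of the holomorph of `ZMod N`, viewed as the permutation
`g ↦ (g + b) * u` of `ZMod N`: first translate by `b` (right multiplication by `a^b`),
then apply the automorphism "multiplication by the unit `u`". -/
def aff (N : ℕ) (u : (ZMod N)ˣ) (b : ZMod N) : Equiv.Perm (ZMod N) :=
  (Equiv.addRight b).trans (Units.mulRight u)

/-- The automorphism `y : a ↦ a^5` of `ZMod (2^n)` as a unit. -/
def u5 (n : ℕ) : (ZMod (2 ^ n))ˣ :=
  ZMod.unitOfCoprime 5 (Nat.Coprime.pow_right n (by decide))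

theorem Subgroup.eq_top_of_index_eq_two_of_le {G : Type*} [Group G] {K H : Subgroup G}
    (hK : K.index = 2) (hKH : K ≤ H) {a : G} (haH : a ∈ H) (haK : a ∉ K) : H = ⊤ := by
  refine (eq_top_iff' H).2 fun b ↦ ?_
  by_cases hb : b ∈ K
  · exact hKH hb
  · have hba : b * a ∈ H := hKH ((mul_mem_iff_of_index_two hK).2 (iff_of_false hb haK))
    simpa using mul_mem hba (inv_mem haH)

section Holomorph

variable {N : ℕ}

@[simp]
theorem aff_apply (u : (ZMod N)ˣ) (b x : ZMod N) : aff N u b x = (x + b) * u := rfl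

theorem aff_apply_eq_self_iff (u : (ZMod N)ˣ) (b x : ZMod N) :
    aff N u b x = x ↔ b = (↑u⁻¹ - 1) * x := by
  rw [aff_apply, ← Units.eq_mul_inv_iff_mul_eq]
  constructor <;> intro h <;> linear_combination h

def affFixingHom (N : ℕ) (g : ZMod N) : (ZMod N)ˣ →* Equiv.Perm (ZMod N) where
  toFun u := aff N u ((↑u⁻¹ - 1) * g)
  map_one' := by ext x; simp
  map_mul' u v := by
    ext x
    have hu : ((u⁻¹ : (ZMod N)ˣ) : ZMod N) * u = 1 := Units.inv_mul u
    have hv : ((v⁻¹ : (ZMod N)ˣ) : ZMod N) * v = 1 := Units.inv_mul v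
    simp only [aff_apply, Equiv.Perm.mul_apply, mul_inv_rev, Units.val_mul]
    linear_combination (↑v⁻¹ * g * v - g) * hu + (1 - u) * g * hv

theorem affFixingHom_apply (g : ZMod N) (u : (ZMod N)ˣ) :
    affFixingHom N g u = aff N u ((↑u⁻¹ - 1) * g) := rfl

theorem setOf_aff_fixing_eq_range (g : ZMod N) :
    {σ : Equiv.Perm (ZMod N) | (∃ u b, σ = aff N u b) ∧ σ g = g} =
      Set.range (affFixingHom N g) := by
  ext σ
  constructor
  · rintro ⟨⟨u, b, rfl⟩, hfix⟩
    exact ⟨u, by rw [affFixingHom_apply, ← (aff_apply_eq_self_iff u b g).1 hfix]⟩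
  · rintro ⟨u, rfl⟩
    exact ⟨⟨u, _, rfl⟩, (aff_apply_eq_self_iff _ _ _).2 rfl⟩

end Holomorph

section UnitsTwoPow

variable {n : ℕ}

theorem coe_u5 : (u5 n : ZMod (2 ^ n)) = 5 := by simp [u5]

theorem orderOf_u5 (hn : 2 ≤ n) : orderOf (u5 n) = 2 ^ (n - 2) := by
  obtain ⟨m, rfl⟩ := Nat.exists_eq_add_of_le' hn
  rw [← orderOf_units, coe_u5, ZMod.orderOf_five, Nat.add_sub_cancel]

theorem index_zpowers_u5 (hn : 2 ≤ n) : (Subgroup.zpowers (u5 n)).index = 2 := by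
  have hcard := (Subgroup.zpowers (u5 n)).index_mul_card
  rw [Nat.card_zpowers, orderOf_u5 hn, Nat.card_eq_fintype_card, ZMod.card_units_eq_totient,
    Nat.totient_prime_pow Nat.prime_two (by omega), show n - 1 = n - 2 + 1 by omega] at hcard
  apply Nat.eq_of_mul_eq_mul_right (pow_pos two_pos (n - 2))
  rw [hcard]
  ring

theorem neg_one_notMem_zpowers_u5 (hn : 2 ≤ n) :
    (-1 : (ZMod (2 ^ n))ˣ) ∉ Subgroup.zpowers (u5 n) := by
  have h4 : 4 ∣ 2 ^ n := pow_dvd_pow 2 hn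
  have h5 : ZMod.unitsMap h4 (u5 n) = 1 := by
    ext
    rw [ZMod.unitsMap_def, Units.coe_map, MonoidHom.coe_coe, coe_u5, map_ofNat]
    rfl
  have hneg : ZMod.unitsMap h4 (-1) = -1 := by
    ext
    simp [ZMod.unitsMap_def]
  rintro ⟨k, hk⟩
  have hk4 := congrArg (ZMod.unitsMap h4) hk
  rw [map_zpow, h5, one_zpow, hneg] at hk4
  exact absurd hk4 (by decide)

theorem closure_neg_one_u5 (hn : 2 ≤ n) : Subgroup.closure {-1, u5 n} = ⊤ :=
  Subgroup.eq_top_of_index_eq_two_of_le (index_zpowers_u5 hn)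
    (Subgroup.zpowers_le.2 (Subgroup.subset_closure (by simp)))
    (Subgroup.subset_closure (by simp)) (neg_one_notMem_zpowers_u5 hn)

end UnitsTwoPow

theorem stabilizer_eq_general (n : ℕ) (hn : 3 ≤ n) (g : ZMod (2 ^ n)) :
    {σ : Equiv.Perm (ZMod (2 ^ n)) |
        (∃ (u : (ZMod (2 ^ n))ˣ) (b : ZMod (2 ^ n)), σ = aff (2 ^ n) u b) ∧ σ g = g}
      = ↑(Subgroup.closure
          {aff (2 ^ n) (-1) (-2 * g),
           aff (2 ^ n) (u5 n)
             (((((u5 n)⁻¹ : (ZMod (2 ^ n))ˣ) : ZMod (2 ^ n)) - 1) * g)}) := by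
  have hx : aff (2 ^ n) (-1) (-2 * g) = affFixingHom (2 ^ n) g (-1) := by
    rw [affFixingHom_apply, inv_neg, inv_one, Units.val_neg, Units.val_one]
    congr 1
    ring
  rw [hx, ← affFixingHom_apply, ← Set.image_pair, ← MonoidHom.map_closure,
    closure_neg_one_u5 (by omega), ← MonoidHom.range_eq_map, MonoidHom.coe_range,
    setOf_aff_fixing_eq_range]

/-- For a nonidentity `g ∈ Z_{2^n}` (`n ≥ 3`), the stabilizer of `g` in
`Hol(Z_{2^n})` (the set of elements `a^b x^β y^δ` of the holomorph fixing `g`) is the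
subgroup generated by `g^{-2} x` and `g^{5^{-1} - 1} y`. -/
theorem stabilizer_eq (n : ℕ) (hn : 3 ≤ n) (g : ZMod (2 ^ n)) (hg : g ≠ 0) :
    {σ : Equiv.Perm (ZMod (2 ^ n)) |
        (∃ (u : (ZMod (2 ^ n))ˣ) (b : ZMod (2 ^ n)), σ = aff (2 ^ n) u b) ∧ σ g = g}
      = ↑(Subgroup.closure
          {aff (2 ^ n) (-1) (-2 * g),
           aff (2 ^ n) (u5 n)
             (((((u5 n)⁻¹ : (ZMod (2 ^ n))ˣ) : ZMod (2 ^ n)) - 1) * g)}) :=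
  stabilizer_eq_general n hn g
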